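/- arXiv:2307.09253 — 9 statements merged into one kernel-verified Lean document; each statement's English description precedes it below -/
import Mathlib

section
/- A catoid C is local (i.e. t(x) = s(y) implies x⊙y ≠ ∅) if and only if the direct-image identities s(x⊙y) = s(x⊙s(y)) and t(x⊙y) = t(t(x)⊙y) hold for all x, y ∈ C. -/
/-!
In any catoid, `s(x ⊙ y) ⊆ {s x}` and `t(x ⊙ y) ⊆ {t y}`, while `x ⊙ s(y)` is `{x}` when
`t x = s y` and empty otherwise. So when `t x ≠ s y` both sides of the source identity are empty,
and when `t x = s y` it reads `s(x ⊙ y) = {s x}`, which says exactly that `x ⊙ y ≠ ∅`.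
The target identity is the source identity of the opposite catoid.
-/

/-- A catoid: a set with a multioperation and source/target maps. -/
structure Catoid (C : Type*) where
  mul : C → C → Set C
  src : C → C
  tgt : C → C
  assoc : ∀ x y z : C, (⋃ v ∈ mul y z, mul x v) = ⋃ u ∈ mul x y, mul u z
  weak_local : ∀ x y : C, mul x y ≠ ∅ → tgt x = src y
  src_unit : ∀ x : C, mul (src x) x = {x}
  tgt_unit : ∀ x : C, mul x (tgt x) = {x}

namespace Catoid

variable {C : Type*} (X : Catoid C)

def op : Catoid C where
  mul x y := X.mul y x
  src := X.tgt
  tgt := X.src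
  assoc x y z := (X.assoc z y x).symm
  weak_local x y h := (X.weak_local y x h).symm
  src_unit := X.tgt_unit
  tgt_unit := X.src_unit

def IsLocal : Prop :=
  ∀ x y : C, X.tgt x = X.src y → X.mul x y ≠ ∅

theorem tgt_eq_src_of_mem_mul {x y z : C} (h : z ∈ X.mul x y) : X.tgt x = X.src y :=
  X.weak_local x y (Set.nonempty_of_mem h).ne_empty

theorem mul_eq_empty_of_tgt_ne {x y : C} (h : X.tgt x ≠ X.src y) : X.mul x y = ∅ :=
  not_imp_comm.mp (X.weak_local x y) h

theorem mul_src_of_tgt_eq {x y : C} (h : X.tgt x = X.src y) : X.mul x (X.src y) = {x} := by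
  rw [← h, X.tgt_unit]

theorem tgt_src (x : C) : X.tgt (X.src x) = X.src x :=
  X.tgt_eq_src_of_mem_mul (x := X.src x) (y := x) (by rw [X.src_unit]; rfl)

theorem src_src (x : C) : X.src (X.src x) = X.src x :=
  calc X.src (X.src x) = X.src (X.tgt (X.src x)) := by rw [tgt_src]
    _ = X.tgt (X.src x) := X.op.tgt_src (X.src x)
    _ = X.src x := X.tgt_src x

theorem src_eq_of_mem_mul {x y z : C} (h : z ∈ X.mul x y) : X.src z = X.src x := by
  -- `x ⊙ y = s(x) ⊙ (x ⊙ y)` by associativity, and `s(x) ⊙ v` can only be `{v}` with `s v = s x`.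
  have hassoc := X.assoc (X.src x) x y
  rw [X.src_unit, Set.biUnion_singleton] at hassoc
  have hz : z ∈ ⋃ v ∈ X.mul x y, X.mul (X.src x) v := by rwa [hassoc]
  obtain ⟨v, -, hzv⟩ := Set.mem_iUnion₂.mp hz
  have hsv : X.src x = X.src v := X.tgt_src x ▸ X.tgt_eq_src_of_mem_mul hzv
  rw [hsv, X.src_unit, Set.mem_singleton_iff] at hzv
  rw [hzv, hsv]

theorem image_src_mul_of_nonempty {x y : C} (h : (X.mul x y).Nonempty) :
    X.src '' X.mul x y = {X.src x} :=
  (h.image _).subset_singleton_iff.mp <| Set.image_subset_iff.mpr fun _ hz => X.src_eq_of_mem_mul hz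

theorem IsLocal.op {X : Catoid C} (hX : X.IsLocal) : X.op.IsLocal :=
  fun x y h => hX y x h.symm

theorem IsLocal.image_src_mul {X : Catoid C} (hX : X.IsLocal) (x y : C) :
    X.src '' X.mul x y = X.src '' X.mul x (X.src y) := by
  by_cases h : X.tgt x = X.src y
  · rw [X.mul_src_of_tgt_eq h, Set.image_singleton,
      X.image_src_mul_of_nonempty (Set.nonempty_iff_ne_empty.mpr (hX x y h))]
  · rw [X.mul_eq_empty_of_tgt_ne h, X.mul_eq_empty_of_tgt_ne (by rwa [src_src])]

theorem IsLocal.image_tgt_mul {X : Catoid C} (hX : X.IsLocal) (x y : C) :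
    X.tgt '' X.mul x y = X.tgt '' X.mul (X.tgt x) y :=
  hX.op.image_src_mul y x

theorem isLocal_of_image_src_mul (h : ∀ x y : C, X.src '' X.mul x y = X.src '' X.mul x (X.src y)) :
    X.IsLocal := by
  intro x y hxy hempty
  have hxy' := h x y
  rw [hempty, X.mul_src_of_tgt_eq hxy, Set.image_empty, Set.image_singleton] at hxy'
  exact Set.singleton_ne_empty _ hxy'.symm

end Catoid

/-- A catoid is local iff the direct-image locality identities hold. -/
theorem catoid_local_iff {C : Type*} (X : Catoid C) :
    (∀ x y : C, X.tgt x = X.src y → X.mul x y ≠ ∅) ↔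
    (∀ x y : C, X.src '' (X.mul x y) = X.src '' (X.mul x (X.src y)) ∧
                X.tgt '' (X.mul x y) = X.tgt '' (X.mul (X.tgt x) y)) :=
  ⟨fun hX x y => ⟨Catoid.IsLocal.image_src_mul hX x y, Catoid.IsLocal.image_tgt_mul hX x y⟩,
    fun h => X.isLocal_of_image_src_mul fun x y => (h x y).1⟩
end

section
/- Every catoid C equipped with an operation (−)⁻ : C → C satisfying s(x) ∈ x⊙x⁻ and t(x) ∈ x⁻⊙x for all x is local, i.e. t(x) = s(y) implies x⊙y ≠ ∅. -/
namespace Catoid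

variable {C : Type*} (X : Catoid C)

theorem mul_eq_empty_of_mem_mul {a b c u : C} (hu : u ∈ X.mul a b) (hbc : X.mul b c = ∅) :
    X.mul u c = ∅ := by
  have h := X.assoc a b c
  rw [hbc, Set.biUnion_empty] at h
  exact Set.subset_empty_iff.mp (h ▸ Set.subset_biUnion_of_mem (u := fun u => X.mul u c) hu)

theorem mul_src_nonempty (y : C) : (X.mul (X.src y) y).Nonempty := by
  rw [X.src_unit]
  exact Set.singleton_nonempty y

end Catoid

theorem catoid_with_inv_local_general {C : Type*} (X : Catoid C) (inv : C → C)
    (h2 : ∀ x, X.tgt x ∈ X.mul (inv x) x) :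
    ∀ x y : C, X.tgt x = X.src y → X.mul x y ≠ ∅ := by
  intro x y hxy hxy_empty
  have h_tgt_empty : X.mul (X.tgt x) y = ∅ := X.mul_eq_empty_of_mem_mul (h2 x) hxy_empty
  rw [hxy] at h_tgt_empty
  exact (X.mul_src_nonempty y).ne_empty h_tgt_empty

/-- A catoid with a weak inversion is local. -/
theorem catoid_with_inv_local {C : Type*} (X : Catoid C) (inv : C → C)
    (h1 : ∀ x, X.src x ∈ X.mul x (inv x)) (h2 : ∀ x, X.tgt x ∈ X.mul (inv x) x) :
    ∀ x y : C, X.tgt x = X.src y → X.mul x y ≠ ∅ :=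
  catoid_with_inv_local_general X inv h2
end

section
/- Every groupoid is a category; that is, every catoid with inversion satisfying x⊙x⁻ = {s(x)} and x⁻⊙x = {t(x)} is both local (t(x) = s(y) implies x⊙y ≠ ∅) and functional (x, x' ∈ y⊙z implies x = x'). -/
/-- A groupoid: a catoid with inversion. -/
structure Groupoid (C : Type*) extends Catoid C where
  inv : C → C
  mul_inv : ∀ x : C, mul x (inv x) = {src x}
  inv_mul : ∀ x : C, mul (inv x) x = {tgt x}


/-!
Associativity turns the inverse laws into cancellation: if `t y = s z` then
`⋃ v ∈ y ⊙ z, y⁻ ⊙ v = (y⁻ ⊙ y) ⊙ z = t(y) ⊙ z = {z}`, so `y ⊙ z` cannot be empty.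
Dually, if `s y = s v` then `⋃ w ∈ y⁻ ⊙ v, y ⊙ w = s(y) ⊙ v = {v}`. Picking from the first
identity some `v` with `z ∈ y⁻ ⊙ v`, the second one puts all of `y ⊙ z` inside `{v}`.
-/

namespace Groupoid

variable {C : Type*} (G : Groupoid C)

theorem tgt_inv (x : C) : G.tgt (G.inv x) = G.src x :=
  G.weak_local _ _ (by rw [G.inv_mul]; exact Set.singleton_ne_empty _)

theorem biUnion_inv_mul_mul {y z : C} (h : G.tgt y = G.src z) :
    ⋃ v ∈ G.mul y z, G.mul (G.inv y) v = {z} := by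
  rw [G.assoc, G.inv_mul, Set.biUnion_singleton, h, G.src_unit]

theorem biUnion_mul_inv_mul {y v : C} (h : G.src y = G.src v) :
    ⋃ w ∈ G.mul (G.inv y) v, G.mul y w = {v} := by
  rw [G.assoc, G.mul_inv, Set.biUnion_singleton, h, G.src_unit]

theorem mul_ne_empty {y z : C} (h : G.tgt y = G.src z) : G.mul y z ≠ ∅ := by
  intro hyz
  have := G.biUnion_inv_mul_mul h
  rw [hyz, Set.biUnion_empty] at this
  exact Set.singleton_ne_empty z this.symm

theorem mul_subsingleton (y z : C) : (G.mul y z).Subsingleton := by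
  intro x hx x' hx'
  have hyz : G.tgt y = G.src z := G.weak_local y z (Set.nonempty_iff_ne_empty.mp ⟨x, hx⟩)
  obtain ⟨v, -, hzv⟩ :=
    Set.mem_iUnion₂.mp ((G.biUnion_inv_mul_mul hyz).symm ▸ Set.mem_singleton z)
  have hsrc : G.src y = G.src v :=
    G.tgt_inv y ▸ G.weak_local _ _ (Set.nonempty_iff_ne_empty.mp ⟨z, hzv⟩)
  have hsub : G.mul y z ⊆ {v} :=
    G.biUnion_mul_inv_mul hsrc ▸ Set.subset_biUnion_of_mem (u := fun w => G.mul y w) hzv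
  exact (hsub hx).trans (hsub hx').symm

end Groupoid

/-- Every groupoid is a category: it is local and functional. -/
theorem groupoid_is_category {C : Type*} (G : Groupoid C) :
    (∀ x y : C, G.tgt x = G.src y → G.mul x y ≠ ∅) ∧
    (∀ x x' y z : C, x ∈ G.mul y z → x' ∈ G.mul y z → x = x') :=
  ⟨fun _ _ => G.mul_ne_empty, fun _ _ y z hx hx' => G.mul_subsingleton y z hx hx'⟩
end

section
/- An involutive quantale satisfies the Dedekind law αβ ⊓ γ ≤ (α ⊓ γβ°)(β ⊓ α°γ) if and only if it satisfies the modular law αβ ⊓ γ ≤ (α ⊓ γβ°)β. -/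
/-- A quantale: a complete lattice with an associative, sup-preserving
multiplication with unit. -/
structure Quantale' (Q : Type*) [CompleteLattice Q] where
  mul : Q → Q → Q
  one : Q
  mul_assoc : ∀ a b c : Q, mul (mul a b) c = mul a (mul b c)
  one_mul : ∀ a : Q, mul one a = a
  mul_one : ∀ a : Q, mul a one = a
  mul_sSup : ∀ (a : Q) (S : Set Q), mul a (sSup S) = ⨆ b ∈ S, mul a b
  sSup_mul : ∀ (a : Q) (S : Set Q), mul (sSup S) a = ⨆ b ∈ S, mul b a

/-- An involutive quantale. -/
structure InvQuantale (Q : Type*) [CompleteLattice Q] extends Quantale' Q where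
  inv : Q → Q
  inv_inv : ∀ a : Q, inv (inv a) = a
  inv_sSup : ∀ S : Set Q, inv (sSup S) = ⨆ a ∈ S, inv a
  inv_mul : ∀ a b : Q, inv (mul a b) = mul (inv b) (inv a)

/-!
Dedekind implies modular by monotonicity of multiplication. Conversely, the involution turns the
modular law into its mirror image `αβ ⊓ γ ≤ α(β ⊓ α°γ)`; applying the modular law and then the
mirror law with `α ⊓ γβ°` in place of `α` gives the Dedekind law, since `(α ⊓ γβ°)° ≤ α°`.
-/

theorem monotone_of_map_sSup {α β : Type*} [CompleteLattice α] [CompleteLattice β] {f : α → β}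
    (hf : ∀ S : Set α, f (sSup S) = ⨆ x ∈ S, f x) : Monotone f := fun a b hab =>
  calc f a ≤ ⨆ x ∈ ({a, b} : Set α), f x := le_iSup₂_of_le a (by simp) le_rfl
    _ = f b := by rw [← hf, sSup_pair, sup_eq_right.mpr hab]

namespace InvQuantale

variable {Q : Type*} [CompleteLattice Q] (X : InvQuantale Q)

theorem mul_left_mono (c : Q) : Monotone (X.mul c) :=
  monotone_of_map_sSup (X.mul_sSup c)

theorem mul_right_mono (c : Q) : Monotone (X.mul · c) :=
  monotone_of_map_sSup (X.sSup_mul c)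

def invOrderIso : Q ≃o Q where
  toEquiv := Function.Involutive.toPerm X.inv X.inv_inv
  map_rel_iff' {a b} := by
    refine ⟨fun (h : X.inv a ≤ X.inv b) => ?_, fun h => monotone_of_map_sSup X.inv_sSup h⟩
    simpa only [X.inv_inv] using monotone_of_map_sSup X.inv_sSup h

theorem inv_inf (a b : Q) : X.inv (a ⊓ b) = X.inv a ⊓ X.inv b :=
  X.invOrderIso.map_inf a b

theorem inv_le_inv_iff {a b : Q} : X.inv a ≤ X.inv b ↔ a ≤ b :=
  X.invOrderIso.le_iff_le

theorem modular_law_of_dedekind_law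
    (h : ∀ a b c : Q, X.mul a b ⊓ c ≤ X.mul (a ⊓ X.mul c (X.inv b)) (b ⊓ X.mul (X.inv a) c))
    (a b c : Q) : X.mul a b ⊓ c ≤ X.mul (a ⊓ X.mul c (X.inv b)) b :=
  (h a b c).trans (X.mul_left_mono _ inf_le_left)

theorem mirror_modular_law_of_modular_law
    (h : ∀ a b c : Q, X.mul a b ⊓ c ≤ X.mul (a ⊓ X.mul c (X.inv b)) b)
    (a b c : Q) : X.mul a b ⊓ c ≤ X.mul a (b ⊓ X.mul (X.inv a) c) := by
  rw [← X.inv_le_inv_iff]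
  simpa only [X.inv_inf, X.inv_mul, X.inv_inv] using h (X.inv b) (X.inv a) (X.inv c)

theorem dedekind_law_of_modular_law
    (h : ∀ a b c : Q, X.mul a b ⊓ c ≤ X.mul (a ⊓ X.mul c (X.inv b)) b)
    (a b c : Q) :
    X.mul a b ⊓ c ≤ X.mul (a ⊓ X.mul c (X.inv b)) (b ⊓ X.mul (X.inv a) c) := by
  set a' := a ⊓ X.mul c (X.inv b)
  calc X.mul a b ⊓ c
      ≤ X.mul a' b ⊓ c := le_inf (h a b c) inf_le_right
    _ ≤ X.mul a' (b ⊓ X.mul (X.inv a') c) := X.mirror_modular_law_of_modular_law h a' b c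
    _ ≤ X.mul a' (b ⊓ X.mul (X.inv a) c) :=
        X.mul_left_mono a' <| inf_le_inf_left b <|
          X.mul_right_mono c <| X.inv_le_inv_iff.mpr inf_le_left

end InvQuantale

/-- The Dedekind law holds in an involutive quantale iff the modular law does. -/
theorem dedekind_iff_modular {Q : Type*} [CompleteLattice Q] (X : InvQuantale Q) :
    (∀ a b c : Q, X.mul a b ⊓ c ≤ X.mul (a ⊓ X.mul c (X.inv b)) (b ⊓ X.mul (X.inv a) c)) ↔
    (∀ a b c : Q, X.mul a b ⊓ c ≤ X.mul (a ⊓ X.mul c (X.inv b)) b) :=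
  ⟨X.modular_law_of_dedekind_law, X.dedekind_law_of_modular_law⟩
end

section
/- Every Dedekind quantale is a modal quantale, with domain and codomain defined by dom(α) = 1 ⊓ αα° and cod(α) = 1 ⊓ α°α; in particular dom satisfies: α ≤ dom(α)α, dom(α·dom(β)) = dom(αβ), dom(α) ≤ 1, dom(⊥) = ⊥, and dom(α ⊔ β) = dom(α) ⊔ dom(β), and dually for cod, together with dom∘cod = cod and cod∘dom = dom. -/
/-- A Dedekind quantale: an involutive quantale satisfying the Dedekind law. -/
structure DedekindQuantale (Q : Type*) [CompleteLattice Q] extends InvQuantale Q where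
  dedekind : ∀ a b c : Q,
    mul a b ⊓ c ≤ mul (a ⊓ mul c (inv b)) (b ⊓ mul (inv a) c)

/-- Domain in a Dedekind quantale. -/
def DedekindQuantale.dom {Q : Type*} [CompleteLattice Q] (X : DedekindQuantale Q) (a : Q) : Q :=
  X.one ⊓ X.mul a (X.inv a)

/-- Codomain in a Dedekind quantale. -/
def DedekindQuantale.cod {Q : Type*} [CompleteLattice Q] (X : DedekindQuantale Q) (a : Q) : Q :=
  X.one ⊓ X.mul (X.inv a) a

/-!
Three instances of the Dedekind law carry the proof. With arguments `1, α, α` it gives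
`α ≤ (1 ⊓ αα°)α = dom(α)α`; with `α, t, 1` it gives `1 ⊓ αt ≤ (α ⊓ t°)(t ⊓ α°) ≤ αα°`,
so `dom(αt) ≤ dom(α)`; with `p, 1, 1` it gives `p ≤ p(1 ⊓ p°)` for `p ≤ 1`, whence
subidentities are self-converse idempotents and `dom p = p`. Locality and additivity follow
from these by monotonicity, and the codomain axioms are the domain axioms transported along
the involution, since `cod α = dom α°`.
-/

namespace Quantale'

variable {Q : Type*} [CompleteLattice Q] (X : Quantale' Q)

theorem mul_sup (a b c : Q) : X.mul a (b ⊔ c) = X.mul a b ⊔ X.mul a c := by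
  simpa only [sSup_pair, iSup_pair] using X.mul_sSup a {b, c}

theorem sup_mul (a b c : Q) : X.mul (a ⊔ b) c = X.mul a c ⊔ X.mul b c := by
  simpa only [sSup_pair, iSup_pair] using X.sSup_mul c {a, b}

theorem mul_bot (a : Q) : X.mul a ⊥ = ⊥ := by
  simpa using X.mul_sSup a ∅

theorem bot_mul (a : Q) : X.mul ⊥ a = ⊥ := by
  simpa using X.sSup_mul a ∅

theorem mul_le_mul {a b c d : Q} (hab : a ≤ b) (hcd : c ≤ d) : X.mul a c ≤ X.mul b d :=
  calc X.mul a c ≤ X.mul a c ⊔ X.mul b c := le_sup_left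
    _ = X.mul b c := by rw [← X.sup_mul, sup_eq_right.mpr hab]
    _ ≤ X.mul b c ⊔ X.mul b d := le_sup_left
    _ = X.mul b d := by rw [← X.mul_sup, sup_eq_right.mpr hcd]

end Quantale'

namespace InvQuantale

variable {Q : Type*} [CompleteLattice Q] (X : InvQuantale Q)

theorem inv_sup (a b : Q) : X.inv (a ⊔ b) = X.inv a ⊔ X.inv b := by
  simpa only [sSup_pair, iSup_pair] using X.inv_sSup {a, b}

theorem inv_mono {a b : Q} (h : a ≤ b) : X.inv a ≤ X.inv b :=
  calc X.inv a ≤ X.inv a ⊔ X.inv b := le_sup_left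
    _ = X.inv b := by rw [← X.inv_sup, sup_eq_right.mpr h]

theorem inv_one : X.inv X.one = X.one :=
  calc X.inv X.one = X.mul (X.inv X.one) (X.inv (X.inv X.one)) := by rw [X.inv_inv, X.mul_one]
    _ = X.one := by rw [← X.inv_mul, X.mul_one, X.inv_inv]

end InvQuantale

namespace DedekindQuantale

variable {Q : Type*} [CompleteLattice Q] (X : DedekindQuantale Q)

theorem dom_le_one (a : Q) : X.dom a ≤ X.one := inf_le_left

theorem cod_le_one (a : Q) : X.cod a ≤ X.one := inf_le_left

theorem cod_eq_dom_inv (a : Q) : X.cod a = X.dom (X.inv a) := by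
  rw [cod, dom, X.inv_inv]

theorem dom_mono {a b : Q} (h : a ≤ b) : X.dom a ≤ X.dom b :=
  inf_le_inf_left _ (X.mul_le_mul h (X.inv_mono h))

theorem le_dom_mul (a : Q) : a ≤ X.mul (X.dom a) a := by
  simpa only [dom, X.one_mul, X.inv_one, inf_idem] using X.dedekind X.one a a

theorem one_inf_mul_le_dom (a t : Q) : X.one ⊓ X.mul a t ≤ X.dom a := by
  refine le_inf inf_le_left ?_
  calc X.one ⊓ X.mul a t = X.mul a t ⊓ X.one := inf_comm _ _
    _ ≤ X.mul (a ⊓ X.mul X.one (X.inv t)) (t ⊓ X.mul (X.inv a) X.one) := X.dedekind a t X.one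
    _ ≤ X.mul a (X.inv a) := X.mul_le_mul inf_le_left (by rw [X.mul_one]; exact inf_le_right)

theorem dom_mul_le_dom (a b : Q) : X.dom (X.mul a b) ≤ X.dom a := by
  rw [dom, X.mul_assoc]
  exact X.one_inf_mul_le_dom a _

theorem le_mul_one_inf_inv {p : Q} (hp : p ≤ X.one) : p ≤ X.mul p (X.one ⊓ X.inv p) := by
  simpa only [X.mul_one, X.one_mul, X.inv_one, inf_eq_left.mpr hp] using X.dedekind p X.one X.one

theorem inv_of_le_one {p : Q} (hp : p ≤ X.one) : X.inv p = p := by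
  have hle : p ≤ X.inv p :=
    calc p ≤ X.mul p (X.one ⊓ X.inv p) := X.le_mul_one_inf_inv hp
      _ ≤ X.mul X.one (X.inv p) := X.mul_le_mul hp inf_le_right
      _ = X.inv p := X.one_mul _
  refine le_antisymm ?_ hle
  simpa only [X.inv_inv] using X.inv_mono hle

theorem mul_self_of_le_one {p : Q} (hp : p ≤ X.one) : X.mul p p = p := by
  refine le_antisymm ?_ ?_
  · calc X.mul p p ≤ X.mul p X.one := X.mul_le_mul le_rfl hp
      _ = p := X.mul_one p
  · simpa only [X.inv_of_le_one hp, inf_eq_right.mpr hp] using X.le_mul_one_inf_inv hp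

theorem dom_of_le_one {p : Q} (hp : p ≤ X.one) : X.dom p = p := by
  rw [dom, X.inv_of_le_one hp, X.mul_self_of_le_one hp, inf_eq_right.mpr hp]

theorem dom_bot : X.dom ⊥ = ⊥ := by
  rw [dom, X.bot_mul, inf_bot_eq]

theorem dom_sup (a b : Q) : X.dom (a ⊔ b) = X.dom a ⊔ X.dom b := by
  refine le_antisymm ?_ (sup_le (X.dom_mono le_sup_left) (X.dom_mono le_sup_right))
  have hle : a ⊔ b ≤ X.mul (X.dom a ⊔ X.dom b) (a ⊔ b) :=
    sup_le ((X.le_dom_mul a).trans (X.mul_le_mul le_sup_left le_sup_left))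
      ((X.le_dom_mul b).trans (X.mul_le_mul le_sup_right le_sup_right))
  calc X.dom (a ⊔ b) ≤ X.dom (X.mul (X.dom a ⊔ X.dom b) (a ⊔ b)) := X.dom_mono hle
    _ ≤ X.dom (X.dom a ⊔ X.dom b) := X.dom_mul_le_dom _ _
    _ = X.dom a ⊔ X.dom b := X.dom_of_le_one (sup_le (X.dom_le_one a) (X.dom_le_one b))

theorem dom_mul_dom (a b : Q) : X.dom (X.mul a (X.dom b)) = X.dom (X.mul a b) := by
  refine le_antisymm ?_ ?_
  · have h : X.mul a (X.dom b) ≤ X.mul (X.mul a b) (X.inv b) := by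
      rw [X.mul_assoc]
      exact X.mul_le_mul le_rfl inf_le_right
    exact (X.dom_mono h).trans (X.dom_mul_le_dom _ _)
  · have h : X.mul a b ≤ X.mul (X.mul a (X.dom b)) b := by
      rw [X.mul_assoc]
      exact X.mul_le_mul le_rfl (X.le_dom_mul b)
    exact (X.dom_mono h).trans (X.dom_mul_le_dom _ _)

theorem le_mul_cod (a : Q) : a ≤ X.mul a (X.cod a) := by
  calc a = X.inv (X.inv a) := (X.inv_inv a).symm
    _ ≤ X.inv (X.mul (X.dom (X.inv a)) (X.inv a)) := X.inv_mono (X.le_dom_mul (X.inv a))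
    _ = X.mul a (X.cod a) := by
      rw [X.inv_mul, X.inv_inv, X.inv_of_le_one (X.dom_le_one _), cod_eq_dom_inv]

theorem cod_mul_cod (a b : Q) : X.cod (X.mul (X.cod a) b) = X.cod (X.mul a b) := by
  rw [X.cod_eq_dom_inv (X.mul _ b), X.cod_eq_dom_inv (X.mul a b), X.inv_mul, X.inv_mul,
    X.inv_of_le_one (X.cod_le_one a), cod_eq_dom_inv, dom_mul_dom]

theorem cod_bot : X.cod ⊥ = ⊥ := by
  rw [cod, X.mul_bot, inf_bot_eq]

theorem cod_sup (a b : Q) : X.cod (a ⊔ b) = X.cod a ⊔ X.cod b := by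
  simp only [cod_eq_dom_inv, X.inv_sup, dom_sup]

end DedekindQuantale

/-- Every Dedekind quantale is a modal quantale with the explicit
domain and codomain operations. -/
theorem dedekind_is_modal {Q : Type*} [CompleteLattice Q] (X : DedekindQuantale Q) :
    (∀ a : Q, a ≤ X.mul (X.dom a) a) ∧
    (∀ a b : Q, X.dom (X.mul a (X.dom b)) = X.dom (X.mul a b)) ∧
    (∀ a : Q, X.dom a ≤ X.one) ∧
    (X.dom ⊥ = ⊥) ∧
    (∀ a b : Q, X.dom (a ⊔ b) = X.dom a ⊔ X.dom b) ∧
    (∀ a : Q, a ≤ X.mul a (X.cod a)) ∧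
    (∀ a b : Q, X.cod (X.mul (X.cod a) b) = X.cod (X.mul a b)) ∧
    (∀ a : Q, X.cod a ≤ X.one) ∧
    (X.cod ⊥ = ⊥) ∧
    (∀ a b : Q, X.cod (a ⊔ b) = X.cod a ⊔ X.cod b) ∧
    (∀ a : Q, X.dom (X.cod a) = X.cod a) ∧
    (∀ a : Q, X.cod (X.dom a) = X.dom a) :=
  ⟨X.le_dom_mul, X.dom_mul_dom, X.dom_le_one, X.dom_bot, X.dom_sup,
    X.le_mul_cod, X.cod_mul_cod, X.cod_le_one, X.cod_bot, X.cod_sup,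
    fun a => X.dom_of_le_one (X.cod_le_one a),
    fun a => by
      rw [X.cod_eq_dom_inv, X.inv_of_le_one (X.dom_le_one a), X.dom_of_le_one (X.dom_le_one a)]⟩
end

section
/- In every ω-category (local functional ω-catoid), for all 0 ≤ i < j, the strong morphism laws hold: s_j(x ⊙_i y) = s_j(x) ⊙_i s_j(y) and t_j(x ⊙_i y) = t_j(x) ⊙_i t_j(y). -/
/-- Extension of a multioperation to sets. -/
def setMul {C : Type*} (m : C → C → Set C) (A B : Set C) : Set C :=
  ⋃ a ∈ A, ⋃ b ∈ B, m a b

/-- An ω-catoid: a set with a catoid structure in each dimension i < ω,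
with globular interaction axioms. -/
structure OmegaCatoid (C : Type*) where
  mul : ℕ → C → C → Set C
  src : ℕ → C → C
  tgt : ℕ → C → C
  assoc : ∀ (i : ℕ) (x y z : C),
    (⋃ v ∈ mul i y z, mul i x v) = ⋃ u ∈ mul i x y, mul i u z
  weak_local : ∀ (i : ℕ) (x y : C), mul i x y ≠ ∅ → tgt i x = src i y
  src_unit : ∀ (i : ℕ) (x : C), mul i (src i x) x = {x}
  tgt_unit : ∀ (i : ℕ) (x : C), mul i x (tgt i x) = {x}
  src_src_comm : ∀ i j, i ≠ j → ∀ x : C, src i (src j x) = src j (src i x)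
  src_tgt_comm : ∀ i j, i ≠ j → ∀ x : C, src i (tgt j x) = tgt j (src i x)
  tgt_tgt_comm : ∀ i j, i ≠ j → ∀ x : C, tgt i (tgt j x) = tgt j (tgt i x)
  src_morph : ∀ i j, i ≠ j → ∀ x y : C, src i '' (mul j x y) ⊆ mul j (src i x) (src i y)
  tgt_morph : ∀ i j, i ≠ j → ∀ x y : C, tgt i '' (mul j x y) ⊆ mul j (tgt i x) (tgt i y)
  interchange : ∀ i j, i < j → ∀ w x y z : C,
    setMul (mul i) (mul j w x) (mul j y z) ⊆ setMul (mul j) (mul i w y) (mul i x z)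
  whisker_ss : ∀ i j, i < j → ∀ x : C, src j (src i x) = src i x
  whisker_st : ∀ i j, i < j → ∀ x : C, src j (tgt i x) = tgt i x
  whisker_ts : ∀ i j, i < j → ∀ x : C, tgt j (src i x) = src i x
  whisker_tt : ∀ i j, i < j → ∀ x : C, tgt j (tgt i x) = tgt i x

/-- An ω-category: a local functional ω-catoid. -/
structure OmegaCategory (C : Type*) extends OmegaCatoid C where
  local' : ∀ (i : ℕ) (x y : C), tgt i x = src i y → mul i x y ≠ ∅
  functional : ∀ (i : ℕ) (x x' y z : C), x ∈ mul i y z → x' ∈ mul i y z → x = x'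

/-! In an ω-category an `i`-composite is unique when it exists, and it exists exactly when the
`i`-boundaries match. For `i < j` the maps `s_j` and `t_j` preserve `i`-boundaries, so if
`s_j x ⊙_i s_j y` is nonempty then so is `x ⊙_i y`; the lax morphism law puts the image of its
composite into the at most one-element set `s_j x ⊙_i s_j y`, forcing equality (likewise for `t_j`). -/

namespace OmegaCatoid

variable {C : Type*} (X : OmegaCatoid C) {i j : ℕ}

theorem tgt_src_of_lt (hij : i < j) (x : C) : X.tgt i (X.src j x) = X.tgt i x := by
  rw [← X.src_tgt_comm j i hij.ne' x, X.whisker_st i j hij x]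

theorem src_src_of_lt (hij : i < j) (x : C) : X.src i (X.src j x) = X.src i x := by
  rw [X.src_src_comm i j hij.ne x, X.whisker_ss i j hij x]

theorem tgt_tgt_of_lt (hij : i < j) (x : C) : X.tgt i (X.tgt j x) = X.tgt i x := by
  rw [X.tgt_tgt_comm i j hij.ne x, X.whisker_tt i j hij x]

theorem src_tgt_of_lt (hij : i < j) (x : C) : X.src i (X.tgt j x) = X.src i x := by
  rw [X.src_tgt_comm i j hij.ne x, X.whisker_ts i j hij x]

end OmegaCatoid

namespace OmegaCategory

variable {C : Type*} (X : OmegaCategory C)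

theorem image_mul_eq_of_subset {i : ℕ} {f : C → C} {x y : C}
    (hf : f '' X.mul i x y ⊆ X.mul i (f x) (f y))
    (htgt : X.tgt i (f x) = X.tgt i x) (hsrc : X.src i (f y) = X.src i y) :
    f '' X.mul i x y = X.mul i (f x) (f y) := by
  refine hf.antisymm fun u hu => ?_
  have hmatch : X.tgt i x = X.src i y := by
    rw [← htgt, ← hsrc]
    exact X.weak_local i _ _ (Set.Nonempty.ne_empty ⟨u, hu⟩)
  obtain ⟨z, hz⟩ := Set.nonempty_iff_ne_empty.2 (X.local' i x y hmatch)
  exact ⟨z, hz, X.functional i _ _ _ _ (hf ⟨z, hz, rfl⟩) hu⟩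

end OmegaCategory

/-- In every ω-category, the strong morphism laws hold for i < j. -/
theorem omegaCategory_strong_morphism {C : Type*} (X : OmegaCategory C) :
    ∀ i j, i < j → ∀ x y : C,
      X.src j '' (X.mul i x y) = X.mul i (X.src j x) (X.src j y) ∧
      X.tgt j '' (X.mul i x y) = X.mul i (X.tgt j x) (X.tgt j y) := by
  intro i j hij x y
  exact ⟨X.image_mul_eq_of_subset (X.src_morph j i hij.ne' x y)
      (X.tgt_src_of_lt hij x) (X.src_src_of_lt hij y),
    X.image_mul_eq_of_subset (X.tgt_morph j i hij.ne' x y)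
      (X.tgt_tgt_of_lt hij x) (X.src_tgt_of_lt hij y)⟩
end

section
/- In every ω-catoid, the globular laws hold: for all 0 ≤ i < j, s_i∘s_j = s_i, s_i∘t_j = s_i, t_i∘t_j = t_i, and t_i∘s_j = t_i. -/
/-- The globular laws hold in every ω-catoid. -/
theorem omegaCatoid_globular {C : Type*} (X : OmegaCatoid C) :
    ∀ i j, i < j → ∀ x : C,
      X.src i (X.src j x) = X.src i x ∧ X.src i (X.tgt j x) = X.src i x ∧
      X.tgt i (X.tgt j x) = X.tgt i x ∧ X.tgt i (X.src j x) = X.tgt i x :=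
  fun _ _ hij x =>
    ⟨X.src_src_of_lt hij x, X.src_tgt_of_lt hij x, X.tgt_tgt_of_lt hij x, X.tgt_src_of_lt hij x⟩
end

section
/- In every ω-quantale, for all 0 ≤ i < j: dom_i(α) ·_i β^{*_j} ≤ (dom_i(α) ·_i β)^{*_j} and (α ·_j β)^{*_i} ≤ α^{*_i} ·_j β^{*_i}, where α^{*_k} denotes the Kleene star ⋁_{n≥0} α^{n_k} with respect to ·_k. -/
/-! Both laws come from the interchange law by induction on powers. For the first, `d = dom_i α`
is fixed by `dom_j`, hence `d ≤ d ·_j d`, which lets `d` be duplicated and interchanged into every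
factor of `β^{n_j}`; for the second, likewise `1_i ≤ 1_i ·_j 1_i`. Suprema are then taken using
that `·_i` preserves joins. -/

/-- An ω-quantale: a complete lattice with a modal quantale structure in each
dimension i < ω, with globular interaction axioms. -/
structure OmegaQuantale (Q : Type*) [CompleteLattice Q] where
  mul : ℕ → Q → Q → Q
  one : ℕ → Q
  dom : ℕ → Q → Q
  cod : ℕ → Q → Q
  mul_assoc : ∀ (i : ℕ) (a b c : Q), mul i (mul i a b) c = mul i a (mul i b c)
  one_mul : ∀ (i : ℕ) (a : Q), mul i (one i) a = a
  mul_one : ∀ (i : ℕ) (a : Q), mul i a (one i) = a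
  mul_sSup : ∀ (i : ℕ) (a : Q) (S : Set Q), mul i a (sSup S) = ⨆ b ∈ S, mul i a b
  sSup_mul : ∀ (i : ℕ) (a : Q) (S : Set Q), mul i (sSup S) a = ⨆ b ∈ S, mul i b a
  le_dom : ∀ (i : ℕ) (a : Q), a ≤ mul i (dom i a) a
  dom_local : ∀ (i : ℕ) (a b : Q), dom i (mul i a (dom i b)) = dom i (mul i a b)
  dom_subid : ∀ (i : ℕ) (a : Q), dom i a ≤ one i
  dom_bot : ∀ i : ℕ, dom i ⊥ = ⊥
  dom_sup : ∀ (i : ℕ) (a b : Q), dom i (a ⊔ b) = dom i a ⊔ dom i b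
  le_cod : ∀ (i : ℕ) (a : Q), a ≤ mul i a (cod i a)
  cod_local : ∀ (i : ℕ) (a b : Q), cod i (mul i (cod i a) b) = cod i (mul i a b)
  cod_subid : ∀ (i : ℕ) (a : Q), cod i a ≤ one i
  cod_bot : ∀ i : ℕ, cod i ⊥ = ⊥
  cod_sup : ∀ (i : ℕ) (a b : Q), cod i (a ⊔ b) = cod i a ⊔ cod i b
  dom_cod : ∀ (i : ℕ) (a : Q), dom i (cod i a) = cod i a
  cod_dom : ∀ (i : ℕ) (a : Q), cod i (dom i a) = dom i a
  dom_morph : ∀ i j, i ≠ j → ∀ a b : Q, dom i (mul j a b) ≤ mul j (dom i a) (dom i b)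
  cod_morph : ∀ i j, i ≠ j → ∀ a b : Q, cod i (mul j a b) ≤ mul j (cod i a) (cod i b)
  interchange : ∀ i j, i < j → ∀ a b c d : Q,
    mul i (mul j a b) (mul j c d) ≤ mul j (mul i a c) (mul i b d)
  dom_dom : ∀ i j, i < j → ∀ a : Q, dom j (dom i a) = dom i a

/-- Powers with respect to the i-th composition of an ω-quantale. -/
def OmegaQuantale.pow {Q : Type*} [CompleteLattice Q] (X : OmegaQuantale Q)
    (i : ℕ) (a : Q) : ℕ → Q
  | 0 => X.one i
  | n + 1 => X.mul i a (X.pow i a n)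

/-- The Kleene star with respect to the i-th composition. -/
def OmegaQuantale.star {Q : Type*} [CompleteLattice Q] (X : OmegaQuantale Q)
    (i : ℕ) (a : Q) : Q :=
  ⨆ n : ℕ, X.pow i a n

namespace OmegaQuantale

variable {Q : Type*} [CompleteLattice Q] (X : OmegaQuantale Q)

lemma mul_mono_left (i : ℕ) {a b : Q} (h : a ≤ b) (c : Q) :
    X.mul i a c ≤ X.mul i b c := by
  have hsup := X.sSup_mul i c {a, b}
  rw [sSup_pair, sup_eq_right.2 h] at hsup
  rw [hsup]
  exact le_iSup₂ (f := fun x (_ : x ∈ ({a, b} : Set Q)) => X.mul i x c) a (Or.inl rfl)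

lemma mul_mono_right (i : ℕ) (c : Q) {a b : Q} (h : a ≤ b) :
    X.mul i c a ≤ X.mul i c b := by
  have hsup := X.mul_sSup i c {a, b}
  rw [sSup_pair, sup_eq_right.2 h] at hsup
  rw [hsup]
  exact le_iSup₂ (f := fun x (_ : x ∈ ({a, b} : Set Q)) => X.mul i c x) a (Or.inl rfl)

lemma mul_le_mul (i : ℕ) {a b c d : Q} (hab : a ≤ b) (hcd : c ≤ d) :
    X.mul i a c ≤ X.mul i b d :=
  (X.mul_mono_left i hab c).trans (X.mul_mono_right i b hcd)

lemma mul_iSup (i : ℕ) (c : Q) (f : ℕ → Q) :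
    X.mul i c (⨆ n, f n) = ⨆ n, X.mul i c (f n) := by
  have hsup := X.mul_sSup i c (Set.range f)
  rwa [sSup_range, iSup_range] at hsup

lemma mul_le_of_le_one (i : ℕ) {d : Q} (hd : d ≤ X.one i) (a : Q) : X.mul i d a ≤ a :=
  (X.mul_mono_left i hd a).trans_eq (X.one_mul i a)

lemma dom_one (i : ℕ) : X.dom i (X.one i) = X.one i :=
  le_antisymm (X.dom_subid i _) (by simpa only [X.mul_one] using X.le_dom i (X.one i))

lemma le_mul_self_of_dom_eq (j : ℕ) {d : Q} (hd : X.dom j d = d) : d ≤ X.mul j d d := by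
  simpa only [hd] using X.le_dom j d

lemma pow_le_star (i : ℕ) (a : Q) (n : ℕ) : X.pow i a n ≤ X.star i a :=
  le_iSup (X.pow i a) n

section Interchange

variable {i j : ℕ} (hij : i < j)
include hij

lemma mul_pow_le_pow_mul {d : Q} (hd₁ : d ≤ X.one i) (hd₂ : d ≤ X.mul j d d) (b : Q) (n : ℕ) :
    X.mul i d (X.pow j b n) ≤ X.pow j (X.mul i d b) n := by
  induction n with
  | zero => exact X.mul_le_of_le_one i hd₁ (X.one j)
  | succ n ih =>
    calc X.mul i d (X.mul j b (X.pow j b n))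
        ≤ X.mul i (X.mul j d d) (X.mul j b (X.pow j b n)) := X.mul_mono_left i hd₂ _
      _ ≤ X.mul j (X.mul i d b) (X.mul i d (X.pow j b n)) := X.interchange i j hij _ _ _ _
      _ ≤ X.mul j (X.mul i d b) (X.pow j (X.mul i d b) n) := X.mul_mono_right j _ ih

lemma pow_mul_le_mul_pow (a b : Q) (n : ℕ) :
    X.pow i (X.mul j a b) n ≤ X.mul j (X.pow i a n) (X.pow i b n) := by
  induction n with
  | zero =>
    refine X.le_mul_self_of_dom_eq (d := X.one i) j ?_
    rw [← X.dom_one i, X.dom_dom i j hij]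
  | succ n ih =>
    calc X.mul i (X.mul j a b) (X.pow i (X.mul j a b) n)
        ≤ X.mul i (X.mul j a b) (X.mul j (X.pow i a n) (X.pow i b n)) := X.mul_mono_right i _ ih
      _ ≤ X.mul j (X.mul i a (X.pow i a n)) (X.mul i b (X.pow i b n)) :=
        X.interchange i j hij _ _ _ _

lemma dom_mul_star_le_star_mul (a b : Q) :
    X.mul i (X.dom i a) (X.star j b) ≤ X.star j (X.mul i (X.dom i a) b) := by
  have hidem : X.dom i a ≤ X.mul j (X.dom i a) (X.dom i a) :=
    X.le_mul_self_of_dom_eq j (X.dom_dom i j hij a)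
  rw [star, X.mul_iSup]
  exact iSup_mono (X.mul_pow_le_pow_mul hij (X.dom_subid i a) hidem b)

lemma star_mul_le_mul_star (a b : Q) :
    X.star i (X.mul j a b) ≤ X.mul j (X.star i a) (X.star i b) :=
  iSup_le fun n => (X.pow_mul_le_mul_pow hij a b n).trans
    (X.mul_le_mul j (X.pow_le_star i a n) (X.pow_le_star i b n))

end Interchange

end OmegaQuantale

/-- Star laws in an ω-quantale. -/
theorem omegaQuantale_star_props {Q : Type*} [CompleteLattice Q] (X : OmegaQuantale Q) :
    ∀ i j, i < j → ∀ a b : Q,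
      X.mul i (X.dom i a) (X.star j b) ≤ X.star j (X.mul i (X.dom i a) b) ∧
      X.star i (X.mul j a b) ≤ X.mul j (X.star i a) (X.star i b) :=
  fun _ _ hij a b => ⟨X.dom_mul_star_le_star_mul hij a b, X.star_mul_le_mul_star hij a b⟩
end

section
/- In every ω-Kleene algebra, for all 0 ≤ i < j, the law (α ·_j β)^{*_i} ≤ α^{*_i} ·_j β^{*_i} holds. -/
/-- An ω-Kleene algebra: an ω-semiring (additively idempotent, modelled as a
sup-semilattice with least element ⊥ as 0 and ⊔ as +) with Kleene stars. -/
structure OmegaKA (K : Type*) [SemilatticeSup K] [OrderBot K] where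
  mul : ℕ → K → K → K
  one : ℕ → K
  dom : ℕ → K → K
  cod : ℕ → K → K
  star : ℕ → K → K
  mul_assoc : ∀ (i : ℕ) (a b c : K), mul i (mul i a b) c = mul i a (mul i b c)
  one_mul : ∀ (i : ℕ) (a : K), mul i (one i) a = a
  mul_one : ∀ (i : ℕ) (a : K), mul i a (one i) = a
  mul_sup : ∀ (i : ℕ) (a b c : K), mul i a (b ⊔ c) = mul i a b ⊔ mul i a c
  sup_mul : ∀ (i : ℕ) (a b c : K), mul i (a ⊔ b) c = mul i a c ⊔ mul i b c
  mul_bot : ∀ (i : ℕ) (a : K), mul i a ⊥ = ⊥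
  bot_mul : ∀ (i : ℕ) (a : K), mul i ⊥ a = ⊥
  le_dom : ∀ (i : ℕ) (a : K), a ≤ mul i (dom i a) a
  dom_local : ∀ (i : ℕ) (a b : K), dom i (mul i a (dom i b)) = dom i (mul i a b)
  dom_subid : ∀ (i : ℕ) (a : K), dom i a ≤ one i
  dom_bot : ∀ i : ℕ, dom i ⊥ = ⊥
  dom_sup : ∀ (i : ℕ) (a b : K), dom i (a ⊔ b) = dom i a ⊔ dom i b
  le_cod : ∀ (i : ℕ) (a : K), a ≤ mul i a (cod i a)
  cod_local : ∀ (i : ℕ) (a b : K), cod i (mul i (cod i a) b) = cod i (mul i a b)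
  cod_subid : ∀ (i : ℕ) (a : K), cod i a ≤ one i
  cod_bot : ∀ i : ℕ, cod i ⊥ = ⊥
  cod_sup : ∀ (i : ℕ) (a b : K), cod i (a ⊔ b) = cod i a ⊔ cod i b
  dom_cod : ∀ (i : ℕ) (a : K), dom i (cod i a) = cod i a
  cod_dom : ∀ (i : ℕ) (a : K), cod i (dom i a) = dom i a
  dom_morph : ∀ i j, i ≠ j → ∀ a b : K, dom i (mul j a b) ≤ mul j (dom i a) (dom i b)
  cod_morph : ∀ i j, i ≠ j → ∀ a b : K, cod i (mul j a b) ≤ mul j (cod i a) (cod i b)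
  interchange : ∀ i j, i < j → ∀ a b c d : K,
    mul i (mul j a b) (mul j c d) ≤ mul j (mul i a c) (mul i b d)
  dom_dom : ∀ i j, i < j → ∀ a : K, dom j (dom i a) = dom i a
  star_unfoldl : ∀ (i : ℕ) (a : K), one i ⊔ mul i a (star i a) ≤ star i a
  star_unfoldr : ∀ (i : ℕ) (a : K), one i ⊔ mul i (star i a) a ≤ star i a
  star_indl : ∀ (i : ℕ) (a b c : K), c ⊔ mul i a b ≤ b → mul i (star i a) c ≤ b
  star_indr : ∀ (i : ℕ) (a b c : K), c ⊔ mul i b a ≤ b → mul i c (star i a) ≤ b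
  star_dom : ∀ i j, i < j → ∀ a b : K,
    mul i (dom i a) (star j b) ≤ star j (mul i (dom i a) b)
  star_cod : ∀ i j, i < j → ∀ a b : K,
    mul i (star j a) (cod i b) ≤ star j (mul i a (cod i b))

/-! By star induction it suffices that `γ := α^{*_i} ·_j β^{*_i}` contains `1_i` and absorbs
`(α ·_j β) ·_i −` on the left. The first holds because `1_i` is an `i`-domain element, hence fixed
by `dom_j` and so `≤ 1_i ·_j 1_i`; the second is interchange followed by the unfold law in each
`·_j`-factor. -/

namespace OmegaKA

variable {K : Type*} [SemilatticeSup K] [OrderBot K] (X : OmegaKA K)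

theorem mul_le_mul (k : ℕ) {a b c d : K} (hab : a ≤ b) (hcd : c ≤ d) :
    X.mul k a c ≤ X.mul k b d :=
  calc X.mul k a c ≤ X.mul k b c := by
        rw [← sup_eq_right.mpr hab, X.sup_mul]; exact le_sup_left
    _ ≤ X.mul k b d := by
        rw [← sup_eq_right.mpr hcd, X.mul_sup]; exact le_sup_left

theorem one_le_star (i : ℕ) (a : K) : X.one i ≤ X.star i a :=
  le_sup_left.trans (X.star_unfoldl i a)

theorem mul_star_le_star (i : ℕ) (a : K) : X.mul i a (X.star i a) ≤ X.star i a :=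
  le_sup_right.trans (X.star_unfoldl i a)

theorem star_le_of_one_le_of_mul_le (i : ℕ) {a b : K} (hone : X.one i ≤ b)
    (hmul : X.mul i a b ≤ b) : X.star i a ≤ b := by
  simpa only [X.mul_one] using X.star_indl i a b (X.one i) (sup_le hone hmul)

theorem dom_one (i : ℕ) : X.dom i (X.one i) = X.one i := by
  refine le_antisymm (X.dom_subid i _) ?_
  simpa only [X.mul_one] using X.le_dom i (X.one i)

theorem one_le_mul_one_one {i j : ℕ} (hij : i < j) :
    X.one i ≤ X.mul j (X.one i) (X.one i) := by
  have hdom : X.dom j (X.one i) = X.one i := by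
    rw [← X.dom_one i, X.dom_dom i j hij]
  simpa only [hdom] using X.le_dom j (X.one i)

end OmegaKA

/-- In every ω-Kleene algebra, (α ·_j β)^{*_i} ≤ α^{*_i} ·_j β^{*_i} for i < j. -/
theorem omegaKA_star_mul {K : Type*} [SemilatticeSup K] [OrderBot K] (X : OmegaKA K) :
    ∀ i j, i < j → ∀ a b : K,
      X.star i (X.mul j a b) ≤ X.mul j (X.star i a) (X.star i b) := by
  intro i j hij a b
  refine X.star_le_of_one_le_of_mul_le i ?_ ?_
  · exact (X.one_le_mul_one_one hij).trans
      (X.mul_le_mul j (X.one_le_star i a) (X.one_le_star i b))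
  · calc X.mul i (X.mul j a b) (X.mul j (X.star i a) (X.star i b))
        ≤ X.mul j (X.mul i a (X.star i a)) (X.mul i b (X.star i b)) :=
          X.interchange i j hij a b _ _
      _ ≤ X.mul j (X.star i a) (X.star i b) :=
          X.mul_le_mul j (X.mul_star_le_star i a) (X.mul_star_le_star i b)
end
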